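/- arXiv:2605.29619 — 2 statements merged into one kernel-verified Lean document; each statement's English description precedes it below -/
import Mathlib

section
/- Let α > 1, ν ∈ (-1, 0], h : (0,∞) → [0,∞) non-decreasing, g(x) = x^α h(x), and b(x,y,z) = (ν+2) x^ν / y^{ν+1} for 0 < x < y. Then for all y > 0 and z > 0, g(y) − ∫₀^y g(x) b(x,y,z) dx ≥ θ_α g(y) with θ_α = (α−1)/(ν+α+1). -/
open MeasureTheory Set

theorem stmt4 (α ν : ℝ) (hα : 1 < α) (hν : ν ∈ Set.Ioc (-1 : ℝ) 0)
    (h : ℝ → ℝ) (hh0 : ∀ x : ℝ, 0 < x → 0 ≤ h x)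
    (hmono : MonotoneOn h (Set.Ioi (0 : ℝ)))
    (g : ℝ → ℝ) (hg : ∀ x : ℝ, g x = x ^ α * h x)
    (b : ℝ → ℝ → ℝ → ℝ)
    (hb : ∀ x y z : ℝ, 0 < x → x < y → b x y z = (ν + 2) * x ^ ν / y ^ (ν + 1)) :
    ∀ y z : ℝ, 0 < y → 0 < z →
      ((α - 1) / (ν + α + 1)) * g y ≤ g y - ∫ x in Set.Ioo (0 : ℝ) y, g x * b x y z := by
  intro y z hy hz
  obtain ⟨hν1, hν0⟩ := hν
  have hden : (0:ℝ) < ν + α + 1 := by linarith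
  have hyp : (0:ℝ) < y ^ (ν + 1) := Real.rpow_pos_of_pos hy _
  set r : ℝ := α + ν with hr
  have hr1 : (-1:ℝ) < r := by simp only [hr]; linarith
  set C : ℝ := (ν + 2) * h y / y ^ (ν + 1) with hC
  have hCpos : 0 ≤ C := by
    apply div_nonneg _ hyp.le
    have := hh0 y hy
    nlinarith
  -- rewrite the integrand
  have hcong : ∫ x in Set.Ioo (0 : ℝ) y, g x * b x y z
      = ∫ x in Set.Ioo (0 : ℝ) y, (x ^ α * ((ν + 2) * x ^ ν / y ^ (ν + 1))) * h x := by
    apply setIntegral_congr_fun measurableSet_Ioo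
    intro x hx
    dsimp only
    rw [hg, hb x y z hx.1 hx.2]; ring
  rw [hcong]
  set F : ℝ → ℝ := fun x => (x ^ α * ((ν + 2) * x ^ ν / y ^ (ν + 1))) * h x with hF
  -- integrability of the majorant
  have hint2 : IntegrableOn (fun x => C * x ^ r) (Set.Ioo (0:ℝ) y) := by
    have : IntegrableOn (fun x : ℝ => x ^ r) (Set.Ioo (0:ℝ) y) := by
      have := (intervalIntegral.intervalIntegrable_rpow' (a := 0) (b := y) hr1)
      rw [intervalIntegrable_iff_integrableOn_Ioo_of_le hy.le] at this
      exact this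
    exact this.const_mul C
  -- pointwise bound on the set
  have hbound : ∀ x ∈ Set.Ioo (0:ℝ) y, F x ≤ C * x ^ r := by
    intro x hx
    have hx0 := hx.1
    have hxa : (0:ℝ) ≤ x ^ α := (Real.rpow_pos_of_pos hx0 _).le
    have hxn : (0:ℝ) ≤ x ^ ν := (Real.rpow_pos_of_pos hx0 _).le
    have hhx : h x ≤ h y := hmono hx0 hy hx.2.le
    have hhx0 : 0 ≤ h x := hh0 x hx0
    have hxr : x ^ r = x ^ α * x ^ ν := Real.rpow_add hx0 α ν
    rw [hC, hxr]
    have key : x ^ α * ((ν + 2) * x ^ ν / y ^ (ν + 1)) * h x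
        ≤ x ^ α * ((ν + 2) * x ^ ν / y ^ (ν + 1)) * h y := by
      apply mul_le_mul_of_nonneg_left hhx
      exact mul_nonneg hxa (div_nonneg (by nlinarith) hyp.le)
    calc F x ≤ x ^ α * ((ν + 2) * x ^ ν / y ^ (ν + 1)) * h y := key
      _ = (ν + 2) * h y / y ^ (ν + 1) * (x ^ α * x ^ ν) := by ring
  have hFnonneg : ∀ x ∈ Set.Ioo (0:ℝ) y, 0 ≤ F x := by
    intro x hx
    have hx0 := hx.1
    have := hh0 x hx0
    have h1 : (0:ℝ) ≤ x ^ α := (Real.rpow_pos_of_pos hx0 _).le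
    have h2 : (0:ℝ) ≤ x ^ ν := (Real.rpow_pos_of_pos hx0 _).le
    have h3 : 0 ≤ (ν + 2) * x ^ ν / y ^ (ν + 1) := div_nonneg (by nlinarith) hyp.le
    exact mul_nonneg (mul_nonneg h1 h3) this
  -- integrability of F
  have hFmeas : AEStronglyMeasurable F (volume.restrict (Set.Ioo (0:ℝ) y)) := by
    have hmh : AEMeasurable h (volume.restrict (Set.Ioo (0:ℝ) y)) :=
      aemeasurable_restrict_of_monotoneOn measurableSet_Ioo
        (hmono.mono (fun x hx => hx.1))
    have : AEMeasurable F (volume.restrict (Set.Ioo (0:ℝ) y)) := by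
      apply AEMeasurable.mul _ hmh
      apply Measurable.aemeasurable
      fun_prop
    exact this.aestronglyMeasurable
  have hint1 : IntegrableOn F (Set.Ioo (0:ℝ) y) := by
    apply Integrable.mono' hint2 hFmeas
    rw [ae_restrict_iff' measurableSet_Ioo]
    filter_upwards with x hx
    rw [Real.norm_eq_abs, abs_of_nonneg (hFnonneg x hx)]
    exact hbound x hx
  have hmono' : ∫ x in Set.Ioo (0:ℝ) y, F x ≤ ∫ x in Set.Ioo (0:ℝ) y, C * x ^ r :=
    setIntegral_mono_on hint1 hint2 measurableSet_Ioo hbound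
  -- compute the majorant integral
  have hcomp : ∫ x in Set.Ioo (0:ℝ) y, C * x ^ r = C * (y ^ (r + 1) / (r + 1)) := by
    rw [integral_const_mul]
    congr 1
    rw [← integral_Ioc_eq_integral_Ioo, ← intervalIntegral.integral_of_le hy.le,
      integral_rpow (Or.inl hr1)]
    rw [Real.zero_rpow (by linarith : r + 1 ≠ 0)]
    ring
  -- combine
  have hval : C * (y ^ (r + 1) / (r + 1)) = (ν + 2) / (ν + α + 1) * g y := by
    have : y ^ (r + 1) = y ^ α * y ^ (ν + 1) := by
      rw [← Real.rpow_add hy]; congr 1; simp only [hr]; ring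
    rw [hC, this, hg]
    have hr1' : r + 1 = ν + α + 1 := by simp only [hr]; ring
    rw [hr1']
    field_simp
  have hgy : 0 ≤ g y := by
    rw [hg]
    have := hh0 y hy
    exact mul_nonneg (Real.rpow_pos_of_pos hy _).le this
  have hI : ∫ x in Set.Ioo (0:ℝ) y, F x ≤ (ν + 2) / (ν + α + 1) * g y := by
    rw [← hval, ← hcomp]; exact hmono'
  have : (α - 1) / (ν + α + 1) * g y = g y - (ν + 2) / (ν + α + 1) * g y := by
    field_simp
    ring
  linarith
end

section
/- Let 0 < a ≤ b < ∞ and Ω ∈ L^∞((0,a) × (0,b)). If f_n ⇀ f weakly in L¹(0,a) and g_n ⇀ g weakly in L¹(0,b), then ∫₀^a ∫₀^b Ω(x,y) f_n(x) g_n(y) dy dx → ∫₀^a ∫₀^b Ω(x,y) f(x) g(y) dy dx as n → ∞. -/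
/-!
Put `Ψₙ x = ∫ y, Ω x y * gₙ y` and `Ψ x = ∫ y, Ω x y * g y`. Weak convergence of `gₙ` gives
`Ψₙ → Ψ` pointwise. A weakly convergent sequence in `L¹` of a bounded interval is uniformly
integrable, hence bounded in `L¹`, so the `Ψₙ` are uniformly bounded. Then
`∫ fₙ Ψₙ - ∫ f Ψ = (∫ fₙ Ψ - ∫ f Ψ) + ∫ fₙ (Ψₙ - Ψ)`: the first term tends to zero by weak
convergence of `fₙ`, the second because `fₙ` is uniformly integrable and `Ψₙ - Ψ → 0` in measure.

Uniform integrability is the Vitali–Hahn–Saks theorem, proved by a gliding hump: if it failed,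
there would be disjoint sets `Fᵢ` and indices `nᵢ` with `|∫_{Fᵢ} f_{nᵢ}| ≥ ε` such that the later
sets are nearly invisible to `f_{nᵢ}`; along a sparse subsequence the earlier ones are nearly
invisible too, so the integrals over the union of the `Fᵢ` stay `≥ ε / 2` and cannot converge.
-/

open MeasureTheory Set Filter Topology Function
open scoped ENNReal NNReal

namespace MeasureTheory

variable {α : Type*} [MeasurableSpace α] {μ : Measure α}

theorem eLpNorm_one_indicator_eq_ofReal_setIntegral_abs {f : α → ℝ} (hf : Integrable f μ)
    {s : Set α} (hs : MeasurableSet s) :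
    eLpNorm (s.indicator f) 1 μ = ENNReal.ofReal (∫ x in s, |f x| ∂μ) := by
  rw [eLpNorm_indicator_eq_eLpNorm_restrict hs, eLpNorm_one_eq_lintegral_enorm,
    ← ofReal_integral_norm_eq_lintegral_enorm hf.restrict]
  simp only [Real.norm_eq_abs]

theorem unifIntegrable_one_iff {ι : Type*} {f : ι → α → ℝ} (hf : ∀ i, Integrable (f i) μ) :
    UnifIntegrable f 1 μ ↔ ∀ ε > 0, ∃ δ > 0, ∀ i s, MeasurableSet s → μ s ≤ ENNReal.ofReal δ →
      ∫ x in s, |f i x| ∂μ ≤ ε := by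
  refine forall₂_congr fun ε hε => ⟨fun ⟨δ, hδ, h⟩ => ⟨δ, hδ, ?_⟩, fun ⟨δ, hδ, h⟩ => ⟨δ, hδ, ?_⟩⟩
  all_goals refine fun i s hs hμs => ?_; specialize h i s hs hμs
  · rwa [eLpNorm_one_indicator_eq_ofReal_setIntegral_abs (hf i) hs,
      ENNReal.ofReal_le_ofReal_iff hε.le] at h
  · rw [eLpNorm_one_indicator_eq_ofReal_setIntegral_abs (hf i) hs]
    exact ENNReal.ofReal_le_ofReal h

theorem exists_subset_half_setIntegral_abs_le {f : α → ℝ} (hfm : StronglyMeasurable f)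
    (hf : Integrable f μ) {E : Set α} (hE : MeasurableSet E) :
    ∃ E' ⊆ E, MeasurableSet E' ∧ (∫ x in E, |f x| ∂μ) / 2 ≤ |∫ x in E', f x ∂μ| := by
  set P := {x | 0 ≤ f x}
  have hP : MeasurableSet P := stronglyMeasurable_const.measurableSet_le hfm
  have hpos : ∫ x in E ∩ P, f x ∂μ = ∫ x in E ∩ P, |f x| ∂μ :=
    setIntegral_congr_fun (hE.inter hP) fun x hx => (abs_of_nonneg hx.2).symm
  have hneg : ∫ x in E \ P, f x ∂μ = -∫ x in E \ P, |f x| ∂μ := by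
    rw [← integral_neg]
    exact setIntegral_congr_fun (hE.diff hP) fun x hx => by
      rw [abs_of_neg (not_le.1 hx.2), neg_neg]
  have hsplit := integral_inter_add_sdiff hP hf.abs.integrableOn (s := E) (μ := μ)
  have h0 : 0 ≤ ∫ x in E ∩ P, |f x| ∂μ := integral_nonneg fun _ => abs_nonneg _
  have h1 : 0 ≤ ∫ x in E \ P, |f x| ∂μ := integral_nonneg fun _ => abs_nonneg _
  by_cases h : (∫ x in E, |f x| ∂μ) / 2 ≤ ∫ x in E ∩ P, |f x| ∂μ
  · exact ⟨E ∩ P, inter_subset_left, hE.inter hP, by rwa [hpos, abs_of_nonneg h0]⟩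
  · refine ⟨E \ P, sdiff_subset, hE.diff hP, ?_⟩
    rw [hneg, abs_neg, abs_of_nonneg h1]
    linarith

theorem exists_antitone_radius_setIntegral_abs_le {k : ℕ → α → ℝ}
    (hk : ∀ i, Integrable (k i) μ) {η : ℝ} (hη : 0 < η) :
    ∃ ρ : ℕ → ℝ, Antitone ρ ∧ (∀ N, 0 < ρ N) ∧ ∀ N, ∀ i ≤ N, ∀ s, MeasurableSet s →
      μ s ≤ ENNReal.ofReal (ρ N) → ∫ x in s, |k i x| ∂μ ≤ η := by
  have hsingle i := (unifIntegrable_one_iff fun _ : Unit => hk i).1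
    (unifIntegrable_const le_rfl ENNReal.one_ne_top (memLp_one_iff_integrable.2 (hk i))) η hη
  choose r hr hrs using hsingle
  refine ⟨fun N => (Finset.range (N + 1)).inf' Finset.nonempty_range_add_one r,
    fun M N hMN => Finset.inf'_mono r (Finset.range_subset_range.2 (by omega)) _,
    fun N => (Finset.lt_inf'_iff _).2 fun i _ => hr i, fun N i hi s hs hμs => ?_⟩
  refine hrs i () s hs (hμs.trans (ENNReal.ofReal_le_ofReal ?_))
  exact Finset.inf'_le r (Finset.mem_range.2 (by omega))

theorem setIntegral_iUnion_eq_sum_add_setIntegral_iUnion_ge {G : ℕ → Set α}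
    (hG : ∀ l, MeasurableSet (G l)) (hdisj : Pairwise (Disjoint on G)) {u : α → ℝ}
    (hu : Integrable u μ) (m : ℕ) :
    ∫ x in ⋃ l, G l, u x ∂μ =
      ∑ l ∈ Finset.range m, ∫ x in G l, u x ∂μ + ∫ x in ⋃ l ≥ m, G l, u x ∂μ := by
  have hsplit : (⋃ l, G l) = (⋃ l ∈ Finset.range m, G l) ∪ ⋃ l ≥ m, G l := by
    ext x
    simp only [mem_union, mem_iUnion, Finset.mem_range, exists_prop]
    constructor
    · rintro ⟨l, hl⟩
      exact (lt_or_ge l m).imp (fun h => ⟨l, h, hl⟩) fun h => ⟨l, h, hl⟩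
    · rintro (⟨l, -, hl⟩ | ⟨l, -, hl⟩) <;> exact ⟨l, hl⟩
  have hdisj' : Disjoint (⋃ l ∈ Finset.range m, G l) (⋃ l ≥ m, G l) := by
    simp only [disjoint_iUnion_left, disjoint_iUnion_right, Finset.mem_range]
    exact fun l hl l' hl' => hdisj (by omega)
  rw [hsplit, setIntegral_union hdisj' (.iUnion fun l => .iUnion fun _ => hG l)
      hu.integrableOn hu.integrableOn,
    integral_biUnion_finset _ (fun l _ => hG l) (fun l _ l' _ h => hdisj h)
      fun _ _ => hu.integrableOn]

theorem le_abs_setIntegral_iUnion_of_humps {u : ℕ → α → ℝ} (hu : ∀ i, Integrable (u i) μ)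
    {F : ℕ → Set α} (hF : ∀ i, MeasurableSet (F i)) (hdisj : Pairwise (Disjoint on F))
    {ε η c : ℝ} (hc : 0 ≤ c) (hhump : ∀ i, ε ≤ |∫ x in F i, u i x ∂μ|)
    (htail : ∀ i, ∫ x in ⋃ j > i, F j, |u i x| ∂μ ≤ η) {s : ℕ → ℕ} (hs : StrictMono s)
    (hseen : ∀ l m, l < m → |∫ x in F (s l), u (s m) x ∂μ| ≤ c / 2 * (1 / 2) ^ s l) (m : ℕ) :
    ε - c - η ≤ |∫ x in ⋃ l, F (s l), u (s m) x ∂μ| := by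
  set past := ∑ l ∈ Finset.range m, ∫ x in F (s l), u (s m) x ∂μ
  set future := ∫ x in ⋃ l ≥ m + 1, F (s l), u (s m) x ∂μ
  have hpast : |past| ≤ c :=
    calc _ ≤ ∑ l ∈ Finset.range m, c / 2 * (1 / 2) ^ l := by
          refine (Finset.abs_sum_le_sum_abs _ _).trans (Finset.sum_le_sum fun l hl => ?_)
          refine (hseen l m (Finset.mem_range.1 hl)).trans ?_
          exact mul_le_mul_of_nonneg_left
            (pow_le_pow_of_le_one (by norm_num) (by norm_num) (hs.id_le l)) (by positivity)
      _ ≤ c := by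
          rw [← Finset.mul_sum]
          nlinarith [sum_geometric_two_le m]
  have hfuture : |future| ≤ η := by
    refine abs_integral_le_integral_abs.trans ((setIntegral_mono_set (hu _).abs.integrableOn
      (ae_of_all _ fun _ => abs_nonneg _) (LE.le.eventuallyLE ?_)).trans (htail (s m)))
    exact iUnion₂_subset fun l hl => subset_iUnion₂ (s := fun j (_ : j > s m) => F j) (s l)
      (hs (by omega))
  have hsum : ∫ x in ⋃ l, F (s l), u (s m) x ∂μ =
      past + ∫ x in F (s m), u (s m) x ∂μ + future := by
    rw [setIntegral_iUnion_eq_sum_add_setIntegral_iUnion_ge (fun l => hF _)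
      (hdisj.comp_of_injective hs.injective) (hu _) (m + 1), Finset.sum_range_succ]
  calc ε - c - η ≤ |∫ x in F (s m), u (s m) x ∂μ| - |past| - |future| := by
        linarith [hhump (s m)]
    _ = |∫ x in ⋃ l, F (s l), u (s m) x ∂μ - past - future| - |past| - |future| := by
        rw [hsum]; ring_nf
    _ ≤ |∫ x in ⋃ l, F (s l), u (s m) x ∂μ| := by
        linarith [abs_sub (∫ x in ⋃ l, F (s l), u (s m) x ∂μ - past) future,
          abs_sub (∫ x in ⋃ l, F (s l), u (s m) x ∂μ) past]

theorem not_forall_tendsto_setIntegral_zero_of_humps {u : ℕ → α → ℝ}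
    (hu : ∀ i, Integrable (u i) μ) {F : ℕ → Set α} (hF : ∀ i, MeasurableSet (F i))
    (hdisj : Pairwise (Disjoint on F)) {ε η : ℝ} (hη : 2 * η < ε)
    (hhump : ∀ i, ε ≤ |∫ x in F i, u i x ∂μ|)
    (htail : ∀ i, ∫ x in ⋃ j > i, F j, |u i x| ∂μ ≤ η) :
    ¬ ∀ A, MeasurableSet A → Tendsto (fun i => ∫ x in A, u i x ∂μ) atTop (𝓝 0) := by
  intro hconv
  have hsmall A (hA : MeasurableSet A) w (hw : 0 < w) :
      ∀ᶠ j in atTop, |∫ x in A, u j x ∂μ| ≤ w :=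
    (hconv A hA).abs.eventually_le_const (by simpa using hw)
  have hη0 : 0 ≤ η := (integral_nonneg fun _ => abs_nonneg _).trans (htail 0)
  have hc : 0 < ε / 2 - η := by linarith
  -- pass to a subsequence along which each hump is almost invisible to all later functions
  obtain ⟨s, -, hs⟩ := exists_seq_of_forall_finset_exists (fun _ => True)
    (fun i j => i < j ∧ |∫ x in F i, u j x ∂μ| ≤ (ε / 2 - η) / 2 * (1 / 2) ^ i) fun S _ =>
      ((eventually_all_finset S).2 fun i _ =>
        (eventually_gt_atTop i).and (hsmall _ (hF i) _ (by positivity))).exists.imp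
        fun j hj => ⟨trivial, hj⟩
  have hsmono : StrictMono s := fun l m h => (hs l m h).1
  obtain ⟨m, hm⟩ := (hsmono.tendsto_atTop.eventually
    (hsmall _ (.iUnion fun l => hF (s l)) (ε / 4) (by linarith))).exists
  linarith [le_abs_setIntegral_iUnion_of_humps hu hF hdisj hc.le hhump htail hsmono
    (fun l m h => (hs l m h).2) m]

theorem exists_disjoint_humps {u : ℕ → α → ℝ} (hu : ∀ i, Integrable (u i) μ) {G : ℕ → Set α}
    (hG : ∀ i, MeasurableSet (G i)) {ε η : ℝ} (hhump : ∀ i, ε ≤ |∫ x in G i, u i x ∂μ|)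
    (htail : ∀ i, ∫ x in ⋃ j > i, G j, |u i x| ∂μ ≤ η) :
    ∃ F : ℕ → Set α, (∀ i, MeasurableSet (F i)) ∧ Pairwise (Disjoint on F) ∧
      (∀ i, ε - η ≤ |∫ x in F i, u i x ∂μ|) ∧ ∀ i, ∫ x in ⋃ j > i, F j, |u i x| ∂μ ≤ η := by
  set T := fun i => ⋃ j > i, G j
  have hT i : MeasurableSet (T i) := .iUnion fun j => .iUnion fun _ => hG j
  have hGT {i j} (h : i < j) : G j ⊆ T i := subset_iUnion₂ (s := fun j (_ : j > i) => G j) j h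
  have hsmall i {S} (hS : S ⊆ T i) : ∫ x in S, |u i x| ∂μ ≤ η :=
    (setIntegral_mono_set (hu i).abs.integrableOn (ae_of_all _ fun _ => abs_nonneg _)
      hS.eventuallyLE).trans (htail i)
  refine ⟨fun i => G i \ T i, fun i => (hG i).diff (hT i), (pairwise_disjoint_on _).2
    fun i j h => disjoint_sdiff_left.mono_right (sdiff_subset.trans (hGT h)), fun i => ?_,
    fun i => hsmall i (iUnion₂_subset fun j h => sdiff_subset.trans (hGT h))⟩
  have hsplit := integral_inter_add_sdiff (hT i) (hu i).integrableOn (s := G i) (μ := μ)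
  have hinter : |∫ x in G i ∩ T i, u i x ∂μ| ≤ η :=
    abs_integral_le_integral_abs.trans (hsmall i inter_subset_right)
  have := abs_add_le (∫ x in G i ∩ T i, u i x ∂μ) (∫ x in G i \ T i, u i x ∂μ)
  rw [hsplit] at this
  linarith [hhump i]

theorem measure_iUnion_le_of_le_geometric {G : ℕ → Set α} {σ : ℕ → ℕ} (hσ : Injective σ)
    {c : ℝ≥0∞} (hG : ∀ j, μ (G j) ≤ c * 2⁻¹ ^ (σ j + 1)) : μ (⋃ j, G j) ≤ c :=
  calc μ (⋃ j, G j) ≤ ∑' j, c * 2⁻¹ ^ (σ j + 1) :=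
        (measure_iUnion_le _).trans (ENNReal.tsum_le_tsum hG)
    _ ≤ c * ∑' m : ℕ, 2⁻¹ ^ (m + 1) := by
        rw [ENNReal.tsum_mul_left]
        exact mul_le_mul_right (ENNReal.tsum_comp_le_tsum_of_injective hσ _) c
    _ = c := by
        rw [ENNReal.tsum_geometric_add_one, ENNReal.one_sub_inv_two,
          ENNReal.mul_inv_cancel (by simp) (by simp), mul_one]

theorem exists_lt_half_le_abs_setIntegral {k : ℕ → α → ℝ}
    (hkm : ∀ i, StronglyMeasurable (k i)) (hk : ∀ i, Integrable (k i) μ) {ε η : ℝ} (hη : η < ε)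
    (hbad : ∀ δ > 0, ∃ i s, MeasurableSet s ∧ μ s ≤ ENNReal.ofReal δ ∧
      ε < ∫ x in s, |k i x| ∂μ)
    {N : ℕ} {δ : ℝ≥0∞} (hδ_pos : δ ≠ 0) (hδ_top : δ ≠ ∞)
    (hsmall : ∀ i ≤ N, ∀ s, MeasurableSet s → μ s ≤ δ → ∫ x in s, |k i x| ∂μ ≤ η) :
    ∃ i, N < i ∧ ∃ E, MeasurableSet E ∧ μ E ≤ δ ∧ ε / 2 ≤ |∫ x in E, k i x ∂μ| := by
  obtain ⟨i, s, hs, hμs, hlarge⟩ := hbad δ.toReal (ENNReal.toReal_pos hδ_pos hδ_top)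
  rw [ENNReal.ofReal_toReal hδ_top] at hμs
  have hNi : N < i := by
    by_contra! hiN
    linarith [hsmall i hiN s hs hμs]
  obtain ⟨E, hEs, hE, hEbig⟩ := exists_subset_half_setIntegral_abs_le (hkm i) (hk i) hs
  exact ⟨i, hNi, E, hE, (measure_mono hEs).trans hμs, by linarith⟩

theorem exists_humps_of_not_unifIntegrable {k : ℕ → α → ℝ}
    (hkm : ∀ i, StronglyMeasurable (k i)) (hk : ∀ i, Integrable (k i) μ)
    (h : ¬ UnifIntegrable k 1 μ) :
    ∃ ε > 0, ∃ n : ℕ → ℕ, StrictMono n ∧ ∃ G : ℕ → Set α, (∀ i, MeasurableSet (G i)) ∧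
      (∀ i, ε ≤ |∫ x in G i, k (n i) x ∂μ|) ∧
      ∀ i, ∫ x in ⋃ j > i, G j, |k (n i) x| ∂μ ≤ ε / 4 := by
  rw [unifIntegrable_one_iff hk] at h
  push Not at h
  obtain ⟨ε, hε, hbad⟩ := h
  obtain ⟨ρ, hρ_anti, hρ_pos, hρ⟩ :=
    exists_antitone_radius_setIntegral_abs_le hk (by positivity : 0 < ε / 8)
  have hstep N := exists_lt_half_le_abs_setIntegral hkm hk (by linarith : ε / 8 < ε) hbad
    (δ := ENNReal.ofReal (ρ N) * 2⁻¹ ^ (N + 1)) (by simp [hρ_pos N])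
    (ENNReal.mul_ne_top ENNReal.ofReal_ne_top (by simp)) fun i hi s hs hμs =>
      hρ N i hi s hs (hμs.trans (mul_le_of_le_one_right' (pow_le_one₀ (by positivity)
        (by norm_num))))
  choose m hm E hE hμE hEbig using hstep
  -- `σ (j + 1) > m (σ j)`, and the sets `E (σ l)`, `l > j`, have total measure below
  -- the radius `ρ (σ (j + 1))`, which controls `k (m (σ j))`
  let σ : ℕ → ℕ := fun j => Nat.rec 0 (fun _ N => m N + 1) j
  have hσ_succ j : σ (j + 1) = m (σ j) + 1 := rfl
  have hσ : StrictMono σ := strictMono_nat_of_lt_succ fun j => by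
    rw [hσ_succ]; linarith [hm (σ j)]
  refine ⟨ε / 2, by positivity, fun j => m (σ j), strictMono_nat_of_lt_succ fun j => ?_,
    fun j => E (σ j), fun j => hE _, fun j => hEbig _, fun i => ?_⟩
  · have := hm (σ (j + 1))
    rw [hσ_succ] at this ⊢
    omega
  have hsub : (⋃ j > i, E (σ j)) ⊆ ⋃ j, E (σ (i + 1 + j)) := iUnion₂_subset fun j hj => by
    obtain ⟨l, rfl⟩ := Nat.exists_eq_add_of_lt hj
    exact subset_iUnion_of_subset l (by rw [add_right_comm])
  have hμ : μ (⋃ j, E (σ (i + 1 + j))) ≤ ENNReal.ofReal (ρ (σ (i + 1))) :=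
    measure_iUnion_le_of_le_geometric (σ := fun j => σ (i + 1 + j))
      (hσ.injective.comp (add_right_injective _)) fun j => (hμE _).trans <|
        mul_le_mul' (ENNReal.ofReal_le_ofReal (hρ_anti (hσ.monotone ((i + 1).le_add_right j))))
          le_rfl
  calc ∫ x in ⋃ j > i, E (σ j), |k (m (σ i)) x| ∂μ
      ≤ ∫ x in ⋃ j, E (σ (i + 1 + j)), |k (m (σ i)) x| ∂μ :=
        setIntegral_mono_set (hk _).abs.integrableOn (ae_of_all _ fun _ => abs_nonneg _)
          hsub.eventuallyLE
    _ ≤ ε / 8 := hρ _ _ (by rw [hσ_succ]; omega) _ (.iUnion fun _ => hE _) hμ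
    _ = ε / 2 / 4 := by ring

theorem unifIntegrable_of_tendsto_setIntegral_zero {k : ℕ → α → ℝ}
    (hkm : ∀ i, StronglyMeasurable (k i)) (hk : ∀ i, Integrable (k i) μ)
    (h0 : ∀ A, MeasurableSet A → Tendsto (fun n => ∫ x in A, k n x ∂μ) atTop (𝓝 0)) :
    UnifIntegrable k 1 μ := by
  by_contra hk_ui
  obtain ⟨ε, hε, n, hn, G, hG, hhump, htail⟩ :=
    exists_humps_of_not_unifIntegrable hkm hk hk_ui
  obtain ⟨F, hF, hdisj, hhump', htail'⟩ := exists_disjoint_humps (fun i => hk (n i)) hG hhump htail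
  exact not_forall_tendsto_setIntegral_zero_of_humps (fun i => hk (n i)) hF hdisj
    (by linarith : 2 * (ε / 4) < ε - ε / 4) hhump' htail' fun A hA =>
      (h0 A hA).comp hn.tendsto_atTop

theorem unifIntegrable_of_tendsto_setIntegral {f : ℕ → α → ℝ} {g : α → ℝ}
    (hf : ∀ i, Integrable (f i) μ) (hg : Integrable g μ)
    (h : ∀ A, MeasurableSet A →
      Tendsto (fun n => ∫ x in A, f n x ∂μ) atTop (𝓝 (∫ x in A, g x ∂μ))) :
    UnifIntegrable f 1 μ := by
  set f' := fun n => (hf n).1.mk (f n)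
  set g' := hg.1.mk g
  have hf' n : f n =ᵐ[μ] f' n := (hf n).1.ae_eq_mk
  have hg' : g =ᵐ[μ] g' := hg.1.ae_eq_mk
  have hf'i n : Integrable (f' n) μ := (hf n).congr (hf' n)
  have hg'i : Integrable g' μ := hg.congr hg'
  have hk : UnifIntegrable (fun n => f' n - g') 1 μ := by
    refine unifIntegrable_of_tendsto_setIntegral_zero
      (fun n => (hf n).1.stronglyMeasurable_mk.sub hg.1.stronglyMeasurable_mk)
      (fun n => (hf'i n).sub hg'i) fun A hA => ?_
    have hlim := (h A hA).sub_const (∫ x in A, g x ∂μ)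
    rw [sub_self] at hlim
    refine hlim.congr fun n => ?_
    rw [Pi.sub_def, integral_sub (hf'i n).integrableOn hg'i.integrableOn,
      integral_congr_ae (ae_restrict_of_ae (hf' n)), integral_congr_ae (ae_restrict_of_ae hg')]
  refine (hk.add (unifIntegrable_const le_rfl ENNReal.one_ne_top
    (memLp_one_iff_integrable.2 hg'i)) le_rfl (fun n => ((hf'i n).sub hg'i).1)
    fun _ => hg'i.1).ae_eq fun n => ?_
  filter_upwards [hf' n] with x hx
  simp [hx]

theorem UnifIntegrable.exists_eLpNorm_le_of_isBounded {ι : Type*} {s : Set ℝ}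
    (hs : Bornology.IsBounded s) {f : ι → ℝ → ℝ} (hf : UnifIntegrable f 1 (volume.restrict s)) :
    ∃ C : ℝ≥0, ∀ i, eLpNorm (f i) 1 (volume.restrict s) ≤ C := by
  obtain ⟨δ, hδ, hδf⟩ := hf one_pos
  obtain ⟨t, ht, hst⟩ := Metric.totallyBounded_iff.1
    (hs.isCompact_closure.totallyBounded.subset subset_closure) (δ / 2) (by positivity)
  have := ht.fintype
  rw [biUnion_eq_iUnion] at hst
  set U := ⋃ y : t, Metric.ball (y : ℝ) (δ / 2)
  have hU : ∀ᵐ x ∂volume.restrict s, x ∈ U := by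
    change volume.restrict s Uᶜ = 0
    rw [Measure.restrict_apply (MeasurableSet.iUnion fun _ => measurableSet_ball).compl,
      (disjoint_compl_left.mono_right hst).inter_eq, measure_empty]
  refine ⟨Fintype.card t, fun i => ?_⟩
  calc eLpNorm (f i) 1 (volume.restrict s)
      = ∫⁻ x in U, ‖f i x‖ₑ ∂volume.restrict s := by
        rw [eLpNorm_one_eq_lintegral_enorm, Measure.restrict_eq_self_of_ae_mem hU]
    _ ≤ ∑' y : t, ∫⁻ x in Metric.ball (y : ℝ) (δ / 2), ‖f i x‖ₑ ∂volume.restrict s :=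
        lintegral_iUnion_le _ _
    _ ≤ ∑' _ : t, 1 := ENNReal.tsum_le_tsum fun y => by
        have hball := hδf i (Metric.ball y (δ / 2)) measurableSet_ball <| by
          rw [Measure.restrict_apply measurableSet_ball]
          exact (measure_mono inter_subset_left).trans
            (by rw [Real.volume_ball, mul_div_cancel₀ δ two_ne_zero])
        rwa [eLpNorm_indicator_eq_eLpNorm_restrict measurableSet_ball,
          eLpNorm_one_eq_lintegral_enorm, ENNReal.ofReal_one] at hball
    _ = Fintype.card t := by simp

theorem UniformIntegrable.exists_integral_abs_le {ι : Type*} {f : ι → α → ℝ}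
    (hf : UniformIntegrable f 1 μ) : ∃ M, ∀ i, ∫ x, |f i x| ∂μ ≤ M := by
  obtain ⟨C, hC⟩ := hf.2.2
  refine ⟨C, fun i => ?_⟩
  have h := ofReal_integral_norm_eq_lintegral_enorm (memLp_one_iff_integrable.1 (hf.memLp i))
  simp only [Real.norm_eq_abs, ← eLpNorm_one_eq_lintegral_enorm] at h
  exact (ENNReal.ofReal_le_iff_le_toReal ENNReal.coe_ne_top).1 (h ▸ hC i)

theorem abs_integral_mul_le {f φ : α → ℝ} (hf : Integrable f μ) (hφ : AEStronglyMeasurable φ μ)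
    {K η : ℝ} (hK : ∀ x, |φ x| ≤ K) {S : Set α} (hS : MeasurableSet S) (hη : 0 ≤ η)
    (hφη : ∀ x ∉ S, |φ x| ≤ η) :
    |∫ x, f x * φ x ∂μ| ≤ K * ∫ x in S, |f x| ∂μ + η * ∫ x, |f x| ∂μ := by
  have hint : Integrable (fun x => |f x| * |φ x|) μ := by
    simpa only [abs_mul, mul_comm] using (hf.bdd_mul hφ (c := K) (ae_of_all _ hK)).abs
  calc |∫ x, f x * φ x ∂μ| ≤ ∫ x, |f x| * |φ x| ∂μ :=
        abs_integral_le_integral_abs.trans_eq (by simp_rw [abs_mul])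
    _ = ∫ x in S, |f x| * |φ x| ∂μ + ∫ x in Sᶜ, |f x| * |φ x| ∂μ :=
        (integral_add_compl hS hint).symm
    _ ≤ ∫ x in S, |f x| * K ∂μ + ∫ x in Sᶜ, |f x| * η ∂μ := add_le_add
        (setIntegral_mono_on hint.integrableOn (hf.abs.mul_const K).integrableOn hS
          fun x _ => mul_le_mul_of_nonneg_left (hK x) (abs_nonneg _))
        (setIntegral_mono_on hint.integrableOn (hf.abs.mul_const η).integrableOn hS.compl
          fun x hx => mul_le_mul_of_nonneg_left (hφη x hx) (abs_nonneg _))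
    _ ≤ K * ∫ x in S, |f x| ∂μ + η * ∫ x, |f x| ∂μ := by
        rw [integral_mul_const, integral_mul_const, mul_comm, mul_comm _ η]
        exact add_le_add_right (mul_le_mul_of_nonneg_left
          (setIntegral_le_integral hf.abs (ae_of_all _ fun _ => abs_nonneg _)) hη) _

theorem UniformIntegrable.tendsto_integral_mul_of_tendstoInMeasure {f : ℕ → α → ℝ}
    (hf : UniformIntegrable f 1 μ) {φ : ℕ → α → ℝ} (hφm : ∀ n, AEStronglyMeasurable (φ n) μ)
    {K : ℝ} (hφK : ∀ n x, |φ n x| ≤ K) (hφ : TendstoInMeasure μ φ atTop 0) :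
    Tendsto (fun n => ∫ x, f n x * φ n x ∂μ) atTop (𝓝 0) := by
  have hfi n : Integrable (f n) μ := memLp_one_iff_integrable.1 (hf.memLp n)
  obtain ⟨M, hM⟩ := hf.exists_integral_abs_le
  have hM0 : 0 ≤ M := (integral_nonneg fun _ => abs_nonneg _).trans (hM 0)
  rw [Metric.tendsto_atTop]
  intro ε hε
  set ε₁ := ε / (2 * (|K| + 1))
  set η := ε / (2 * (M + 1))
  obtain ⟨δ, hδ, hδf⟩ := (unifIntegrable_one_iff hfi).1 hf.unifIntegrable ε₁ (by positivity)
  obtain ⟨N, hN⟩ := eventually_atTop.1 <| (tendstoInMeasure_iff_norm.1 hφ η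
    (by positivity)).eventually_le_const (ENNReal.ofReal_pos.2 hδ)
  refine ⟨N, fun n hn => ?_⟩
  set S := toMeasurable μ {x | η ≤ ‖φ n x - (0 : α → ℝ) x‖}
  have hS : MeasurableSet S := measurableSet_toMeasurable _ _
  have hfS : ∫ x in S, |f n x| ∂μ ≤ ε₁ :=
    hδf n S hS (by rw [measure_toMeasurable]; exact hN n hn)
  have hφS x (hx : x ∉ S) : |φ n x| ≤ η := by
    have := notMem_subset (subset_toMeasurable _ _) hx
    simp only [mem_ofPred_eq, Pi.zero_apply, sub_zero, Real.norm_eq_abs, not_le] at this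
    exact this.le
  have hKε : |K| * ε₁ < ε / 2 := by
    simp only [ε₁]
    rw [mul_div_assoc', div_lt_div_iff₀ (by positivity) (by positivity)]
    nlinarith [abs_nonneg K]
  have hMη : η * M < ε / 2 := by
    simp only [η]
    rw [div_mul_eq_mul_div, div_lt_div_iff₀ (by positivity) (by positivity)]
    nlinarith
  rw [Real.dist_0_eq_abs]
  calc |∫ x, f n x * φ n x ∂μ|
      ≤ K * ∫ x in S, |f n x| ∂μ + η * ∫ x, |f n x| ∂μ :=
        abs_integral_mul_le (hfi n) (hφm n) (hφK n) hS (by positivity) hφS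
    _ ≤ |K| * ε₁ + η * M := add_le_add
        ((mul_le_mul_of_nonneg_right (le_abs_self K) (integral_nonneg fun _ => abs_nonneg _)).trans
          (mul_le_mul_of_nonneg_left hfS (abs_nonneg K)))
        (mul_le_mul_of_nonneg_left (hM n) (by positivity))
    _ < ε := by linarith

def TendstoWeaklyInL1 (μ : Measure α) (f : ℕ → α → ℝ) (g : α → ℝ) : Prop :=
  ∀ φ : α → ℝ, Measurable φ → (∃ C : ℝ, ∀ x, |φ x| ≤ C) →
    Tendsto (fun n => ∫ x, f n x * φ x ∂μ) atTop (𝓝 (∫ x, g x * φ x ∂μ))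

theorem TendstoWeaklyInL1.tendsto_setIntegral {f : ℕ → α → ℝ} {g : α → ℝ}
    (h : TendstoWeaklyInL1 μ f g) {A : Set α} (hA : MeasurableSet A) :
    Tendsto (fun n => ∫ x in A, f n x ∂μ) atTop (𝓝 (∫ x in A, g x ∂μ)) := by
  have hind (u : α → ℝ) : ∫ x, u x * A.indicator 1 x ∂μ = ∫ x in A, u x ∂μ := by
    rw [← integral_indicator hA]
    congr 1 with x
    by_cases hx : x ∈ A <;> simp [hx]
  simpa only [hind] using h _ (measurable_one.indicator hA)
    ⟨1, fun x => by by_cases hx : x ∈ A <;> simp [hx]⟩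

theorem TendstoWeaklyInL1.uniformIntegrable {s : Set ℝ} (hs : Bornology.IsBounded s)
    {f : ℕ → ℝ → ℝ} {g : ℝ → ℝ} (h : TendstoWeaklyInL1 (volume.restrict s) f g)
    (hf : ∀ n, Integrable (f n) (volume.restrict s)) (hg : Integrable g (volume.restrict s)) :
    UniformIntegrable f 1 (volume.restrict s) :=
  have hui := unifIntegrable_of_tendsto_setIntegral hf hg fun _ hA => h.tendsto_setIntegral hA
  ⟨fun n => (hf n).1, hui, hui.exists_eLpNorm_le_of_isBounded hs⟩

theorem abs_integral_mul_le_of_abs_le {w u : α → ℝ} {C : ℝ} (hw : ∀ x, |w x| ≤ C)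
    (hu : Integrable u μ) : |∫ x, w x * u x ∂μ| ≤ C * ∫ x, |u x| ∂μ :=
  calc |∫ x, w x * u x ∂μ| = ‖∫ x, w x * u x ∂μ‖ := (Real.norm_eq_abs _).symm
    _ ≤ ∫ x, C * |u x| ∂μ := norm_integral_le_of_norm_le (hu.abs.const_mul C)
        (ae_of_all _ fun x => by
          rw [Real.norm_eq_abs, abs_mul]
          exact mul_le_mul_of_nonneg_right (hw x) (abs_nonneg _))
    _ = C * ∫ x, |u x| ∂μ := integral_const_mul C _

theorem TendstoWeaklyInL1.tendsto_integral_mul [IsFiniteMeasure μ] {f : ℕ → α → ℝ}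
    {f₀ : α → ℝ} (hfw : TendstoWeaklyInL1 μ f f₀) (hf : UniformIntegrable f 1 μ)
    {Ψ : ℕ → α → ℝ} {Ψ₀ : α → ℝ} (hΨ : ∀ n, AEStronglyMeasurable (Ψ n) μ) (hΨ₀ : Measurable Ψ₀)
    {K K₀ : ℝ} (hΨK : ∀ n x, |Ψ n x| ≤ K) (hΨ₀K : ∀ x, |Ψ₀ x| ≤ K₀)
    (hlim : ∀ᵐ x ∂μ, Tendsto (fun n => Ψ n x) atTop (𝓝 (Ψ₀ x))) :
    Tendsto (fun n => ∫ x, f n x * Ψ n x ∂μ) atTop (𝓝 (∫ x, f₀ x * Ψ₀ x ∂μ)) := by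
  have hfi n : Integrable (f n) μ := memLp_one_iff_integrable.1 (hf.memLp n)
  have hΔ n : AEStronglyMeasurable (fun x => Ψ n x - Ψ₀ x) μ :=
    (hΨ n).sub hΨ₀.aestronglyMeasurable
  have hΔK n x : |Ψ n x - Ψ₀ x| ≤ K + K₀ :=
    (abs_sub _ _).trans (add_le_add (hΨK n x) (hΨ₀K x))
  have hsplit n : ∫ x, f n x * Ψ n x ∂μ =
      ∫ x, f n x * Ψ₀ x ∂μ + ∫ x, f n x * (Ψ n x - Ψ₀ x) ∂μ := by
    rw [← integral_add ((hfi n).mul_bdd hΨ₀.aestronglyMeasurable (ae_of_all _ hΨ₀K))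
      ((hfi n).mul_bdd (hΔ n) (ae_of_all _ (hΔK n)))]
    congr 1 with x
    ring
  have hrest := hf.tendsto_integral_mul_of_tendstoInMeasure hΔ hΔK <|
    tendstoInMeasure_of_tendsto_ae hΔ (hlim.mono fun x hx => by simpa using hx.sub_const (Ψ₀ x))
  simpa only [hsplit, add_zero] using (hfw Ψ₀ hΨ₀ ⟨K₀, hΨ₀K⟩).add hrest

section Kernel

variable {β : Type*} [MeasurableSpace β] {ν : Measure β} {W : α → β → ℝ}

theorem measurable_integral_kernel_mul [SFinite ν] (hW : Measurable (uncurry W)) {u : β → ℝ}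
    (hu : AEStronglyMeasurable u ν) : Measurable fun x => ∫ y, W x y * u y ∂ν := by
  have hmk : (fun x => ∫ y, W x y * u y ∂ν) = fun x => ∫ y, W x y * hu.mk u y ∂ν :=
    funext fun x => integral_congr_ae (hu.ae_eq_mk.mono fun y hy => congrArg (W x y * ·) hy)
  rw [hmk]
  refine (StronglyMeasurable.integral_prod_right' (f := fun p : α × β => W p.1 p.2 * hu.mk u p.2)
    ?_).measurable
  exact (hW.mul (hu.stronglyMeasurable_mk.measurable.comp measurable_snd)).stronglyMeasurable

theorem tendsto_integral_integral_kernel_mul_mul [IsFiniteMeasure μ] [SFinite ν]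
    (hW : Measurable (uncurry W)) {C : ℝ} (hWC : ∀ x y, |W x y| ≤ C)
    {f : ℕ → α → ℝ} {f₀ : α → ℝ} (hf : UniformIntegrable f 1 μ) (hfw : TendstoWeaklyInL1 μ f f₀)
    {g : ℕ → β → ℝ} {g₀ : β → ℝ} (hg : ∀ n, Integrable (g n) ν) {M : ℝ}
    (hgM : ∀ n, ∫ y, |g n y| ∂ν ≤ M) (hg₀ : Integrable g₀ ν) (hgw : TendstoWeaklyInL1 ν g g₀) :
    Tendsto (fun n => ∫ x, ∫ y, W x y * f n x * g n y ∂ν ∂μ) atTop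
      (𝓝 (∫ x, ∫ y, W x y * f₀ x * g₀ y ∂ν ∂μ)) := by
  have hpull (u : α → ℝ) (v : β → ℝ) x :
      ∫ y, W x y * u x * v y ∂ν = u x * ∫ y, W x y * v y ∂ν := by
    rw [← integral_const_mul]
    congr 1 with y
    ring
  simp only [hpull]
  refine hfw.tendsto_integral_mul hf
    (fun n => (measurable_integral_kernel_mul hW (hg n).1).aestronglyMeasurable)
    (measurable_integral_kernel_mul hW hg₀.1) (K := |C| * M) (fun n x => ?_)
    (fun x => abs_integral_mul_le_of_abs_le (hWC x) hg₀) (ae_of_all _ fun x => ?_)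
  · exact (abs_integral_mul_le_of_abs_le (fun y => (hWC x y).trans (le_abs_self C)) (hg n)).trans
      (mul_le_mul_of_nonneg_left (hgM n) (abs_nonneg C))
  · simpa only [mul_comm (W x _)] using hgw (W x) hW.of_uncurry_left ⟨C, hWC x⟩

end Kernel

end MeasureTheory

theorem stmt16_general (a b : ℝ)
    (Ω : ℝ → ℝ → ℝ) (hΩmeas : Measurable (Function.uncurry Ω))
    (hΩbdd : ∃ C : ℝ, ∀ x ∈ Set.Ioo (0 : ℝ) a, ∀ y ∈ Set.Ioo (0 : ℝ) b, |Ω x y| ≤ C)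
    (fn : ℕ → ℝ → ℝ) (f : ℝ → ℝ) (gn : ℕ → ℝ → ℝ) (g : ℝ → ℝ)
    (hfn : ∀ n, IntegrableOn (fn n) (Set.Ioo 0 a)) (hf : IntegrableOn f (Set.Ioo 0 a))
    (hgn : ∀ n, IntegrableOn (gn n) (Set.Ioo 0 b)) (hg : IntegrableOn g (Set.Ioo 0 b))
    (hfweak : ∀ φ : ℝ → ℝ, Measurable φ → (∃ C : ℝ, ∀ x, |φ x| ≤ C) →
      Tendsto (fun n => ∫ x in Set.Ioo (0 : ℝ) a, fn n x * φ x) atTop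
        (nhds (∫ x in Set.Ioo (0 : ℝ) a, f x * φ x)))
    (hgweak : ∀ φ : ℝ → ℝ, Measurable φ → (∃ C : ℝ, ∀ x, |φ x| ≤ C) →
      Tendsto (fun n => ∫ y in Set.Ioo (0 : ℝ) b, gn n y * φ y) atTop
        (nhds (∫ y in Set.Ioo (0 : ℝ) b, g y * φ y))) :
    Tendsto
      (fun n => ∫ x in Set.Ioo (0 : ℝ) a, ∫ y in Set.Ioo (0 : ℝ) b, Ω x y * fn n x * gn n y)
      atTop
      (nhds (∫ x in Set.Ioo (0 : ℝ) a, ∫ y in Set.Ioo (0 : ℝ) b, Ω x y * f x * g y)) := by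
  obtain ⟨C, hC⟩ := hΩbdd
  -- truncating `Ω` at height `|C|` changes nothing on the square but makes it bounded everywhere
  set W : ℝ → ℝ → ℝ := fun x y => max (-|C|) (min |C| (Ω x y))
  have hW : Measurable (uncurry W) := measurable_const.max (measurable_const.min hΩmeas)
  have hWC x y : |W x y| ≤ |C| :=
    abs_le.2 ⟨le_max_left _ _, max_le (neg_le_self (abs_nonneg C)) (min_le_left _ _)⟩
  have hWΩ (u v : ℝ → ℝ) : ∫ x in Ioo 0 a, ∫ y in Ioo 0 b, Ω x y * u x * v y =
      ∫ x in Ioo 0 a, ∫ y in Ioo 0 b, W x y * u x * v y :=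
    setIntegral_congr_fun measurableSet_Ioo fun x hx => setIntegral_congr_fun measurableSet_Ioo
      fun y hy => by
        obtain ⟨h₁, h₂⟩ := abs_le.1 ((hC x hx y hy).trans (le_abs_self C))
        simp only [W, min_eq_right h₂, max_eq_right h₁]
  have hfui := TendstoWeaklyInL1.uniformIntegrable (Metric.isBounded_Ioo 0 a) hfweak hfn hf
  obtain ⟨M, hM⟩ := (TendstoWeaklyInL1.uniformIntegrable (Metric.isBounded_Ioo 0 b) hgweak hgn
    hg).exists_integral_abs_le
  simpa only [hWΩ] using
    tendsto_integral_integral_kernel_mul_mul hW hWC hfui hfweak hgn hM hg hgweak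

theorem stmt16 (a b : ℝ) (ha : 0 < a) (hab : a ≤ b)
    (Ω : ℝ → ℝ → ℝ) (hΩmeas : Measurable (Function.uncurry Ω))
    (hΩbdd : ∃ C : ℝ, ∀ x ∈ Set.Ioo (0 : ℝ) a, ∀ y ∈ Set.Ioo (0 : ℝ) b, |Ω x y| ≤ C)
    (fn : ℕ → ℝ → ℝ) (f : ℝ → ℝ) (gn : ℕ → ℝ → ℝ) (g : ℝ → ℝ)
    (hfn : ∀ n, IntegrableOn (fn n) (Set.Ioo 0 a)) (hf : IntegrableOn f (Set.Ioo 0 a))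
    (hgn : ∀ n, IntegrableOn (gn n) (Set.Ioo 0 b)) (hg : IntegrableOn g (Set.Ioo 0 b))
    (hfweak : ∀ φ : ℝ → ℝ, Measurable φ → (∃ C : ℝ, ∀ x, |φ x| ≤ C) →
      Tendsto (fun n => ∫ x in Set.Ioo (0 : ℝ) a, fn n x * φ x) atTop
        (nhds (∫ x in Set.Ioo (0 : ℝ) a, f x * φ x)))
    (hgweak : ∀ φ : ℝ → ℝ, Measurable φ → (∃ C : ℝ, ∀ x, |φ x| ≤ C) →
      Tendsto (fun n => ∫ y in Set.Ioo (0 : ℝ) b, gn n y * φ y) atTop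
        (nhds (∫ y in Set.Ioo (0 : ℝ) b, g y * φ y))) :
    Tendsto
      (fun n => ∫ x in Set.Ioo (0 : ℝ) a, ∫ y in Set.Ioo (0 : ℝ) b, Ω x y * fn n x * gn n y)
      atTop
      (nhds (∫ x in Set.Ioo (0 : ℝ) a, ∫ y in Set.Ioo (0 : ℝ) b, Ω x y * f x * g y)) :=
  stmt16_general a b Ω hΩmeas hΩbdd fn f gn g hfn hf hgn hg hfweak hgweak
end
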